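/- arXiv:1801.02091 — 7 statements merged into one kernel-verified Lean document; each statement's English description precedes it below -/
import Mathlib

section
/- Let $\bar p \in \mathbb{R}^{n+1}_+$ and $\Pi \in [0,1]^{(n+1)\times(n+1)}$ with row sums 1, and $x \in \mathbb{R}^{n+1}_+$. If $V \in \mathbb{R}^{n+1}$ satisfies $V = x + \Pi^\top [\bar p - V^-]^+ - \bar p$, then the vector $p := [\bar p - V^-]^+$ satisfies the Eisenberg-Noe clearing payment fixed point equation $p = \bar p \wedge (x + \Pi^\top p)$. -/
open Matrix

/-- If `V` satisfies the clearing-wealths fixed point equation, then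
`p := [p̄ - V⁻]⁺` satisfies the Eisenberg-Noe clearing payment equation
`p = p̄ ∧ (x + Πᵀ p)`. -/
theorem stmt0 (n : ℕ) (pbar x : Fin (n+1) → ℝ)
    (P : Matrix (Fin (n+1)) (Fin (n+1)) ℝ)
    (hpbar : ∀ i, 0 ≤ pbar i)
    (hP : ∀ i j, P i j ∈ Set.Icc (0:ℝ) 1)
    (hrow : ∀ i, ∑ j, P i j = 1)
    (hx : ∀ i, 0 ≤ x i)
    (V : Fin (n+1) → ℝ)
    (hV : V = x + Pᵀ *ᵥ (fun i => max (pbar i - max (-(V i)) 0) 0) - pbar) :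
    (fun i => max (pbar i - max (-(V i)) 0) 0)
      = fun i => min (pbar i)
          (x i + (Pᵀ *ᵥ (fun i => max (pbar i - max (-(V i)) 0) 0)) i) := by
  set p : Fin (n+1) → ℝ := fun i => max (pbar i - max (-(V i)) 0) 0 with hp
  funext i
  have hy : 0 ≤ x i + (Pᵀ *ᵥ p) i := by
    have : 0 ≤ (Pᵀ *ᵥ p) i := by
      rw [mulVec, dotProduct]
      apply Finset.sum_nonneg
      intro j _
      exact mul_nonneg (hP j i).1 (le_max_right _ _)
    linarith [hx i]
  have hVi : V i = x i + (Pᵀ *ᵥ p) i - pbar i := by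
    conv_lhs => rw [hV]
    simp [p]
  rcases le_or_gt 0 (V i) with h | h
  · have h1 : max (-(V i)) 0 = 0 := max_eq_right (by linarith)
    have h2 : pbar i ≤ x i + (Pᵀ *ᵥ p) i := by linarith
    simp [p, h1, min_eq_left h2, max_eq_left (hpbar i)]
  · have h1 : max (-(V i)) 0 = -(V i) := max_eq_left (by linarith)
    have h2 : x i + (Pᵀ *ᵥ p) i ≤ pbar i := by linarith
    simp only [p, h1]
    rw [min_eq_right h2]
    rw [max_eq_left (by linarith)]
    linarith
end

section
/- Let $A \in [0,1]^{(n+1)\times(n+1)}$ be a matrix with row sums equal to 1, zero diagonal, first row entries $a_{0j} = 1/n$ for $j \ne 0$ (with $a_{00}=0$), and $a_{i0} \ge \delta$ for all $i \ge 1$ where $\delta > 0$. Let $\Lambda \in \{0,1\}^{(n+1)\times(n+1)}$ be a diagonal matrix with $\Lambda_{00} = 0$. Then the matrix $I - A^\top \Lambda$ is invertible and its inverse equals the Neumann series $\sum_{k=0}^\infty (A^\top \Lambda)^k$. -/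
/-!
Transposed, `Aᵀ Λ` becomes `Λ A`, whose rows are the rows of `A` for distressed firms and zero
otherwise; its row sums are at most `1`. Two steps of `Λ A` from a firm `i ≠ 0` lose at least the
weight `a_{i0} ≥ δ` sent to the non-distressed node `0`, so every row sum of `(Λ A)²` is at most
`1 - δ`. Hence `‖(Λ A)²‖ < 1` in the `L^∞` operator norm, the Neumann series converges, and it
inverts `1 - Aᵀ Λ` by telescoping.
-/

open Matrix

theorem summable_pow_of_norm_sq_lt_one {R : Type*} [NormedRing R] [CompleteSpace R] {x : R}
    (h : ‖x ^ 2‖ < 1) : Summable (x ^ ·) := by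
  have hsq : Summable fun k : ℕ => (x ^ 2) ^ k := summable_geometric_of_norm_lt_one h
  refine Summable.even_add_odd ?_ ?_
  · simpa only [pow_mul] using hsq
  · simpa only [pow_succ, pow_mul] using hsq.mul_right x

namespace Matrix

theorem sum_mul_apply {ι κ ν α : Type*} [Fintype κ] [Fintype ν] [NonUnitalNonAssocSemiring α]
    (X : Matrix ι κ α) (Y : Matrix κ ν α) (i : ι) :
    ∑ j, (X * Y) i j = ∑ m, X i m * ∑ j, Y m j := by
  simp only [mul_apply, Finset.mul_sum]
  exact Finset.sum_comm

section LinftyOpNorm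

open scoped Matrix.Norms.Operator

theorem linfty_opNorm_lt_one_of_sum_row_lt_one {ι κ : Type*} [Fintype ι] [Fintype κ]
    {B : Matrix ι κ ℝ} (hB : ∀ i j, 0 ≤ B i j) (hrow : ∀ i, ∑ j, B i j < 1) : ‖B‖ < 1 := by
  rw [linfty_opNorm_def, ← NNReal.coe_one, NNReal.coe_lt_coe, Finset.sup_lt_iff one_pos]
  intro i _
  rw [← NNReal.coe_lt_coe, NNReal.coe_sum]
  simpa only [coe_nnnorm, Real.norm_of_nonneg (hB i _), NNReal.coe_one] using hrow i

theorem summable_pow_of_sum_row_sq_lt_one {ι : Type*} [Fintype ι] [DecidableEq ι]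
    {B : Matrix ι ι ℝ} (hB : ∀ i j, 0 ≤ B i j) (hrow : ∀ i, ∑ j, (B ^ 2) i j < 1) :
    Summable (B ^ ·) := by
  refine summable_pow_of_norm_sq_lt_one (linfty_opNorm_lt_one_of_sum_row_lt_one ?_ hrow)
  intro i j
  rw [sq, mul_apply]
  exact Finset.sum_nonneg fun m _ => mul_nonneg (hB i m) (hB m j)

end LinftyOpNorm

end Matrix

theorem Finset.sum_mul_le_sum_sub_of_apply_eq_zero {ι : Type*} [Fintype ι] [DecidableEq ι]
    {a d : ι → ℝ} {i₀ : ι} (ha : ∀ i, 0 ≤ a i) (hd : ∀ i, d i ≤ 1) (hd₀ : d i₀ = 0) :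
    ∑ i, a i * d i ≤ ∑ i, a i - a i₀ :=
  calc ∑ i, a i * d i = ∑ i ∈ univ.erase i₀, a i * d i := by
        rw [Finset.sum_erase _ (by rw [hd₀, mul_zero])]
    _ ≤ ∑ i ∈ univ.erase i₀, a i :=
        Finset.sum_le_sum fun i _ => mul_le_of_le_one_right (ha i) (hd i)
    _ = ∑ i, a i - a i₀ := Finset.sum_erase_eq_sub (Finset.mem_univ i₀)

section Leontief

variable {ι : Type*} [Fintype ι] [DecidableEq ι] {A : Matrix ι ι ℝ} {d : ι → ℝ} {i₀ : ι}

theorem sum_row_sq_diagonal_mul_lt_one {δ : ℝ} (hA : ∀ i j, 0 ≤ A i j)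
    (hArow : ∀ i, ∑ j, A i j = 1) (hd : ∀ i, d i ∈ Set.Icc 0 1) (hd₀ : d i₀ = 0) (hδ : 0 < δ)
    (hAδ : ∀ i, i ≠ i₀ → δ ≤ A i i₀) (i : ι) :
    ∑ j, ((diagonal d * A) ^ 2) i j < 1 := by
  have hrow : ∑ j, ((diagonal d * A) ^ 2) i j = d i * ∑ m, A i m * d m := by
    simp only [sq, sum_mul_apply, diagonal_mul, ← Finset.mul_sum, hArow, mul_one, mul_assoc]
  rw [hrow]
  by_cases hi : i = i₀
  · rw [hi, hd₀, zero_mul]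
    exact one_pos
  have hsum_nonneg : 0 ≤ ∑ m, A i m * d m :=
    Finset.sum_nonneg fun m _ => mul_nonneg (hA i m) (hd m).1
  calc d i * ∑ m, A i m * d m ≤ ∑ m, A i m * d m :=
        mul_le_of_le_one_left hsum_nonneg (hd i).2
    _ ≤ ∑ m, A i m - A i i₀ :=
        Finset.sum_mul_le_sum_sub_of_apply_eq_zero (hA i) (fun m => (hd m).2) hd₀
    _ < 1 := by linarith [hArow i, hAδ i hi]

theorem summable_pow_diagonal_mul {δ : ℝ} (hA : ∀ i j, 0 ≤ A i j)
    (hArow : ∀ i, ∑ j, A i j = 1) (hd : ∀ i, d i ∈ Set.Icc 0 1) (hd₀ : d i₀ = 0) (hδ : 0 < δ)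
    (hAδ : ∀ i, i ≠ i₀ → δ ≤ A i i₀) :
    Summable ((diagonal d * A) ^ ·) := by
  refine summable_pow_of_sum_row_sq_lt_one (fun i j => ?_)
    (sum_row_sq_diagonal_mul_lt_one hA hArow hd hd₀ hδ hAδ)
  rw [diagonal_mul]
  exact mul_nonneg (hd i).1 (hA i j)

end Leontief

theorem stmt3_general (n : ℕ) (δ : ℝ) (hδ : 0 < δ)
    (A Λ : Matrix (Fin (n+1)) (Fin (n+1)) ℝ)
    (hA01 : ∀ i j, A i j ∈ Set.Icc (0:ℝ) 1)
    (hArow : ∀ i, ∑ j, A i j = 1)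
    (hAδ : ∀ i : Fin (n+1), i ≠ 0 → δ ≤ A i 0)
    (hΛdiag : ∀ i j, i ≠ j → Λ i j = 0)
    (hΛ01 : ∀ i, Λ i i = 0 ∨ Λ i i = 1)
    (hΛ00 : Λ 0 0 = 0) :
    IsUnit (1 - Aᵀ * Λ) ∧ (1 - Aᵀ * Λ)⁻¹ = ∑' k : ℕ, (Aᵀ * Λ) ^ k := by
  have hΛ : diagonal (diag Λ) = Λ := IsDiag.diagonal_diag hΛdiag
  have hΛIcc : ∀ i, diag Λ i ∈ Set.Icc 0 1 := fun i => by
    rcases hΛ01 i with h | h <;> simp [h]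
  have hMT : (Aᵀ * Λ)ᵀ = diagonal (diag Λ) * A := by
    rw [transpose_mul, transpose_transpose]
    nth_rw 1 [← hΛ]
    rw [diagonal_transpose]
  have hsummable : Summable ((Aᵀ * Λ) ^ ·) := by
    rw [← summable_matrix_transpose]
    simpa only [transpose_pow, hMT] using
      summable_pow_diagonal_mul (fun i j => (hA01 i j).1) hArow hΛIcc hΛ00 hδ hAδ
  have hinv := hsummable.one_sub_mul_tsum_pow
  exact ⟨IsUnit.of_mul_eq_one _ hinv, inv_eq_right_inv hinv⟩

/-- Leontief inverse.  For an admissible relative exposure matrix `A`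
and a diagonal 0-1 distress matrix `Λ` with `Λ₀₀ = 0`, the matrix `I - Aᵀ Λ` is
invertible and its inverse equals the Neumann series `∑ₖ (Aᵀ Λ)ᵏ`. -/
theorem stmt3 (n : ℕ) (hn : 0 < n) (δ : ℝ) (hδ : 0 < δ)
    (A Λ : Matrix (Fin (n+1)) (Fin (n+1)) ℝ)
    (hA01 : ∀ i j, A i j ∈ Set.Icc (0:ℝ) 1)
    (hArow : ∀ i, ∑ j, A i j = 1)
    (hAdiag : ∀ i, A i i = 0)
    (hA0 : ∀ j : Fin (n+1), j ≠ 0 → A 0 j = 1 / n)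
    (hAδ : ∀ i : Fin (n+1), i ≠ 0 → δ ≤ A i 0)
    (hΛdiag : ∀ i j, i ≠ j → Λ i j = 0)
    (hΛ01 : ∀ i, Λ i i = 0 ∨ Λ i i = 1)
    (hΛ00 : Λ 0 0 = 0) :
    IsUnit (1 - Aᵀ * Λ) ∧ (1 - Aᵀ * Λ)⁻¹ = ∑' k : ℕ, (Aᵀ * Λ) ^ k :=
  stmt3_general n δ hδ A Λ hA01 hArow hAδ hΛdiag hΛ01 hΛ00
end

section
/- Let $A \in [0,1]^{(n+1)\times(n+1)}$ have row sums 1, zero diagonal, and $a_{i0} \ge \delta > 0$ for all $i \in \{1,\dots,n\}$, and let $\Lambda$ be a diagonal 0-1 matrix with $\Lambda_{00} = 0$. Then the 1-norm operator norm of $(I - A^\top \Lambda)^{-1}$ is at most $(1+\delta)/\delta$; more precisely, $\|(A^\top\Lambda)^k\|_1^{\mathrm{op}} \le (1-\delta)^{k-1}$ for all $k \ge 1$, so $\|(I - A^\top\Lambda)^{-1}\|_1^{\mathrm{op}} \le 1 + \sum_{k=1}^\infty (1-\delta)^{k-1} = 1 + 1/\delta$. -/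
open Matrix

/-- Operator norm induced by the vector 1-norm: maximum column sum of absolute values. -/
noncomputable def opNorm1 {m : ℕ} (M : Matrix (Fin (m+1)) (Fin (m+1)) ℝ) : ℝ :=
  Finset.univ.sup' Finset.univ_nonempty (fun j => ∑ i, |M i j|)

/-- bound on the 1-norm operator norm of the Leontief inverse:
`‖(AᵀΛ)ᵏ‖₁ ≤ (1-δ)^(k-1)` for `k ≥ 1` and `‖(I - AᵀΛ)⁻¹‖₁ ≤ (1+δ)/δ`. -/
theorem stmt4 (n : ℕ) (δ : ℝ) (hδ : 0 < δ)
    (A Λ : Matrix (Fin (n+1)) (Fin (n+1)) ℝ)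
    (hA01 : ∀ i j, A i j ∈ Set.Icc (0:ℝ) 1)
    (hArow : ∀ i, ∑ j, A i j = 1)
    (hAdiag : ∀ i, A i i = 0)
    (hAδ : ∀ i : Fin (n+1), i ≠ 0 → δ ≤ A i 0)
    (hΛdiag : ∀ i j, i ≠ j → Λ i j = 0)
    (hΛ01 : ∀ i, Λ i i = 0 ∨ Λ i i = 1)
    (hΛ00 : Λ 0 0 = 0) :
    (∀ k : ℕ, 1 ≤ k → opNorm1 ((Aᵀ * Λ) ^ k) ≤ (1 - δ) ^ (k - 1)) ∧
    opNorm1 (1 - Aᵀ * Λ)⁻¹ ≤ (1 + δ) / δ := by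
  -- δ ≤ 1
  have hδ1 : δ ≤ 1 := by
    by_cases hn : n = 0
    · subst hn
      have h := hArow 0
      rw [Fin.sum_univ_one, hAdiag] at h
      linarith
    · have h1 : (⟨1, by omega⟩ : Fin (n+1)) ≠ 0 := by
        simp [Fin.ext_iff]
      exact le_trans (hAδ _ h1) (hA01 _ 0).2
  set B := Aᵀ * Λ with hB
  have hΛnn : ∀ i, (0:ℝ) ≤ Λ i i := fun i => by rcases hΛ01 i with h | h <;> rw [h] <;> norm_num
  have hΛle : ∀ i, Λ i i ≤ 1 := fun i => by rcases hΛ01 i with h | h <;> rw [h] <;> norm_num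
  have hBentry : ∀ i j, B i j = A j i * Λ j j := by
    intro i j
    rw [hB, Matrix.mul_apply]
    rw [Finset.sum_eq_single j]
    · simp [Matrix.transpose_apply]
    · intro m _ hm
      rw [hΛdiag m j hm, mul_zero]
    · intro h; exact absurd (Finset.mem_univ j) h
  have hBnn : ∀ i j, 0 ≤ B i j := by
    intro i j; rw [hBentry]
    exact mul_nonneg (hA01 j i).1 (hΛnn j)
  have hPnn : ∀ k i j, 0 ≤ (B ^ k) i j := by
    intro k
    induction k with
    | zero => intro i j; rw [pow_zero, Matrix.one_apply]; split <;> norm_num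
    | succ m ih =>
      intro i j
      rw [pow_succ, Matrix.mul_apply]
      exact Finset.sum_nonneg fun m' _ => mul_nonneg (ih i m') (hBnn m' j)
  have hcol : ∀ m, ∑ i, B i m = Λ m m := by
    intro m
    simp only [hBentry]
    rw [← Finset.sum_mul, hArow, one_mul]
  -- column sums of B^(k+1)
  have hcsum : ∀ k j, ∑ i, (B ^ (k+1)) i j = ∑ m, Λ m m * (B ^ k) m j := by
    intro k j
    have he : ∀ i, (B ^ (k+1)) i j = ∑ m, B i m * (B ^ k) m j := fun i => by
      rw [pow_succ', Matrix.mul_apply]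
    simp_rw [he]
    rw [Finset.sum_comm]
    congr 1; ext m
    rw [← Finset.sum_mul, hcol]
  -- key induction
  have key : ∀ k : ℕ, (∀ j, δ * (∑ i, (B ^ (k+1)) i j) ≤ (B ^ (k+1)) 0 j) ∧
      (∀ j, (∑ i, (B ^ (k+1)) i j) ≤ (1 - δ) ^ k) := by
    intro k
    induction k with
    | zero =>
      constructor
      · intro j
        rw [pow_one, hcol, hBentry]
        by_cases hj : j = 0
        · subst hj; rw [hΛ00]; simp
        · exact mul_le_mul_of_nonneg_right (hAδ j hj) (hΛnn j)
      · intro j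
        rw [pow_one, hcol]
        simpa using hΛle j
    | succ m ih =>
      obtain ⟨ih0, ihs⟩ := ih
      have hstep : ∀ j, ∑ i, (B ^ (m+2)) i j ≤ (1 - δ) * ∑ i, (B ^ (m+1)) i j := by
        intro j
        rw [hcsum (m+1) j]
        have h1 : ∑ m', Λ m' m' * (B ^ (m+1)) m' j
            ≤ ∑ m', ((B ^ (m+1)) m' j - if m' = 0 then (B ^ (m+1)) 0 j else 0) := by
          apply Finset.sum_le_sum
          intro i _
          by_cases hi : i = 0
          · subst hi; rw [hΛ00]; simp
          · simp only [hi, if_false, sub_zero]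
            exact mul_le_of_le_one_left (hPnn _ i j) (hΛle i)
        have h2 : ∑ m', ((B ^ (m+1)) m' j - if m' = 0 then (B ^ (m+1)) 0 j else 0)
            = (∑ i, (B ^ (m+1)) i j) - (B ^ (m+1)) 0 j := by
          rw [Finset.sum_sub_distrib]
          congr 1
          simp
        have h3 := ih0 j
        calc ∑ m', Λ m' m' * (B ^ (m+1)) m' j
            ≤ (∑ i, (B ^ (m+1)) i j) - (B ^ (m+1)) 0 j := by rw [← h2]; exact h1
          _ ≤ (1 - δ) * ∑ i, (B ^ (m+1)) i j := by linarith
      constructor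
      · intro j
        rw [hcsum (m+1) j]
        have : (B ^ (m+2)) 0 j = ∑ m', A m' 0 * Λ m' m' * (B ^ (m+1)) m' j := by
          rw [pow_succ', Matrix.mul_apply]
          congr 1; ext m'
          rw [hBentry]
        rw [this, Finset.mul_sum]
        apply Finset.sum_le_sum
        intro i _
        by_cases hi : i = 0
        · subst hi; rw [hΛ00]; simp
        · rw [← mul_assoc δ, mul_assoc (A i 0), mul_assoc δ]
          exact mul_le_mul_of_nonneg_right (hAδ i hi)
            (mul_nonneg (hΛnn i) (hPnn _ i j))
      · intro j
        calc ∑ i, (B ^ (m+2)) i j ≤ (1 - δ) * ∑ i, (B ^ (m+1)) i j := hstep j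
          _ ≤ (1 - δ) * (1 - δ) ^ m := by
              apply mul_le_mul_of_nonneg_left (ihs j) (by linarith)
          _ = (1 - δ) ^ (m+1) := by ring
  -- part 1
  have part1 : ∀ k : ℕ, 1 ≤ k → opNorm1 (B ^ k) ≤ (1 - δ) ^ (k - 1) := by
    intro k hk
    obtain ⟨m, rfl⟩ := Nat.exists_eq_add_of_le hk
    rw [opNorm1]
    apply Finset.sup'_le
    intro j _
    have : ∑ i, |(B ^ (1 + m)) i j| = ∑ i, (B ^ (1 + m)) i j :=
      Finset.sum_congr rfl fun i _ => abs_of_nonneg (hPnn _ i j)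
    rw [this, Nat.add_comm 1 m, Nat.add_sub_cancel]
    exact (key m).2 j
  refine ⟨part1, ?_⟩
  -- part 2
  have hgeo : Summable (fun k : ℕ => (1 - δ) ^ k) :=
    summable_geometric_of_lt_one (by linarith) (by linarith)
  have hb : Summable (fun k : ℕ => (1 - δ) ^ (k - 1)) := by
    apply (summable_nat_add_iff 1).mp
    simpa using hgeo
  have hcb : ∀ k j, (∑ i, (B ^ k) i j) ≤ (1 - δ) ^ (k - 1) := by
    intro k j
    cases k with
    | zero => simp [Matrix.one_apply]
    | succ m => simpa using (key m).2 j
  have ha : ∀ i j, Summable (fun k => (B ^ k) i j) := by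
    intro i j
    apply Summable.of_nonneg_of_le (fun k => hPnn k i j) _ hb
    intro k
    exact le_trans (Finset.single_le_sum (fun i' _ => hPnn k i' j) (Finset.mem_univ i)) (hcb k j)
  set M : Matrix (Fin (n+1)) (Fin (n+1)) ℝ := Matrix.of (fun i j => ∑' k, (B ^ k) i j) with hM
  have hMentry : ∀ i j, M i j = ∑' k, (B ^ k) i j := fun i j => rfl
  have hBM : ∀ i j, (B * M) i j = ∑' k, (B ^ (k+1)) i j := by
    intro i j
    rw [Matrix.mul_apply]
    have h1 : ∀ m, B i m * M m j = ∑' k, B i m * (B ^ k) m j := by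
      intro m; rw [hMentry, tsum_mul_left]
    simp_rw [h1]
    rw [← Summable.tsum_finsetSum (fun m _ => (ha m j).mul_left _)]
    congr 1; ext k
    rw [pow_succ', Matrix.mul_apply]
  have hinv : (1 - B) * M = 1 := by
    ext i j
    rw [Matrix.sub_mul, Matrix.one_mul, Matrix.sub_apply, hBM, hMentry]
    rw [Summable.tsum_eq_zero_add (ha i j)]
    simp [Matrix.one_apply, pow_zero]
  rw [Matrix.inv_eq_right_inv hinv]
  rw [opNorm1]
  apply Finset.sup'_le
  intro j _
  have hMnn : ∀ i, 0 ≤ M i j := fun i => tsum_nonneg (fun k => hPnn k i j)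
  have h1 : ∑ i, |M i j| = ∑ i, M i j :=
    Finset.sum_congr rfl fun i _ => abs_of_nonneg (hMnn i)
  have h2 : ∑ i, M i j = ∑' k, ∑ i, (B ^ k) i j := by
    simp_rw [hMentry]
    rw [← Summable.tsum_finsetSum (fun i _ => ha i j)]
  have hcs : Summable (fun k => ∑ i, (B ^ k) i j) := by
    apply Summable.of_nonneg_of_le (fun k => Finset.sum_nonneg fun i _ => hPnn k i j)
      (fun k => hcb k j) hb
  have h3 : ∑' k, ∑ i, (B ^ k) i j ≤ ∑' k : ℕ, (1 - δ) ^ (k - 1) :=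
    Summable.tsum_le_tsum (fun k => hcb k j) hcs hb
  have h4 : ∑' k : ℕ, (1 - δ) ^ (k - 1) = 1 + δ⁻¹ := by
    rw [Summable.tsum_eq_zero_add hb]
    have : ∑' k : ℕ, (1 - δ) ^ (k + 1 - 1) = ∑' k : ℕ, (1 - δ) ^ k := by
      congr 1
    rw [this, tsum_geometric_of_lt_one (by linarith) (by linarith)]
    norm_num
  have h5 : (1:ℝ) + δ⁻¹ = (1 + δ) / δ := by
    field_simp
    ring
  rw [h1, h2]
  rw [h5] at h4
  linarith [h3, h4.le]
end

section
/- Let $\Lambda$ be a diagonal 0-1 matrix with $\Lambda_{00}=0$ and let $A, B \in [0,1]^{(n+1)\times(n+1)}$ both have row sums 1, zero diagonal, and entries $a_{i0}, b_{i0} \ge \delta > 0$ for $i \ge 1$. Then $\|(I - A^\top\Lambda)^{-1} - (I - B^\top\Lambda)^{-1}\|_1^{\mathrm{op}} \le n\left(\frac{1+\delta}{\delta}\right)^2 \|\Lambda\|_1^{\mathrm{op}} \, \|A - B\|_1^{\mathrm{op}}$. In particular, the map $A \mapsto (I - A^\top\Lambda)^{-1}$ is Lipschitz continuous on this set of matrices.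 -/
open Matrix

lemma opNorm1_le_of {m : ℕ} {M : Matrix (Fin (m+1)) (Fin (m+1)) ℝ} {c : ℝ}
    (h : ∀ j, ∑ i, |M i j| ≤ c) : opNorm1 M ≤ c :=
  Finset.sup'_le _ _ fun j _ => h j

lemma colsum_le_opNorm1 {m : ℕ} (M : Matrix (Fin (m+1)) (Fin (m+1)) ℝ) (j : Fin (m+1)) :
    ∑ i, |M i j| ≤ opNorm1 M := by
  unfold opNorm1
  exact Finset.le_sup' (fun j => ∑ i, |M i j|) (Finset.mem_univ j)

lemma abs_entry_le_opNorm1 {m : ℕ} (M : Matrix (Fin (m+1)) (Fin (m+1)) ℝ) (i j : Fin (m+1)) :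
    |M i j| ≤ opNorm1 M :=
  le_trans (Finset.single_le_sum (f := fun k => |M k j|) (fun k _ => abs_nonneg _)
    (Finset.mem_univ i)) (colsum_le_opNorm1 M j)

lemma opNorm1_nonneg {m : ℕ} (M : Matrix (Fin (m+1)) (Fin (m+1)) ℝ) : 0 ≤ opNorm1 M :=
  (abs_nonneg _).trans (abs_entry_le_opNorm1 M 0 0)

lemma opNorm1_mul_le {m : ℕ} (M P : Matrix (Fin (m+1)) (Fin (m+1)) ℝ) :
    opNorm1 (M * P) ≤ opNorm1 M * opNorm1 P := by
  apply opNorm1_le_of; intro j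
  calc ∑ i, |(M * P) i j| ≤ ∑ i, ∑ k, |M i k| * |P k j| := by
        refine Finset.sum_le_sum fun i _ => ?_
        rw [Matrix.mul_apply]
        refine (Finset.abs_sum_le_sum_abs _ _).trans ?_
        exact Finset.sum_le_sum fun k _ => le_of_eq (abs_mul _ _)
    _ = ∑ k, (∑ i, |M i k|) * |P k j| := by
        rw [Finset.sum_comm]; simp [Finset.sum_mul]
    _ ≤ ∑ k, opNorm1 M * |P k j| :=
        Finset.sum_le_sum fun k _ =>
          mul_le_mul_of_nonneg_right (colsum_le_opNorm1 M k) (abs_nonneg _)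
    _ = opNorm1 M * ∑ k, |P k j| := by rw [Finset.mul_sum]
    _ ≤ opNorm1 M * opNorm1 P :=
        mul_le_mul_of_nonneg_left (colsum_le_opNorm1 P j) (opNorm1_nonneg M)

/-- entry formula for `Aᵀ * Λ` when `Λ` is diagonal. -/
lemma AtL_apply {m : ℕ} (A Λ : Matrix (Fin (m+1)) (Fin (m+1)) ℝ)
    (hΛdiag : ∀ i j, i ≠ j → Λ i j = 0) (i j : Fin (m+1)) :
    (Aᵀ * Λ) i j = A j i * Λ j j := by
  rw [Matrix.mul_apply]
  rw [Finset.sum_eq_single j]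
  · rfl
  · intro b _ hb
    rw [hΛdiag b j hb, mul_zero]
  · simp

/-- The matrix `1 - AᵀΛ` is invertible and its inverse has column-sum norm at most `(1+δ)/δ`. -/
lemma stmt5_aux (n : ℕ) (δ : ℝ) (hδ : 0 < δ) (hδ1 : δ ≤ 1)
    (A Λ : Matrix (Fin (n+1)) (Fin (n+1)) ℝ)
    (hA01 : ∀ i j, A i j ∈ Set.Icc (0:ℝ) 1)
    (hArow : ∀ i, ∑ j, A i j = 1)
    (hAδ : ∀ i : Fin (n+1), i ≠ 0 → δ ≤ A i 0)
    (hΛdiag : ∀ i j, i ≠ j → Λ i j = 0)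
    (hΛ01 : ∀ i, Λ i i = 0 ∨ Λ i i = 1)
    (hΛ00 : Λ 0 0 = 0) :
    IsUnit (1 - Aᵀ * Λ).det ∧ opNorm1 ((1 - Aᵀ * Λ)⁻¹) ≤ (1 + δ) / δ := by
  set M : Matrix (Fin (n+1)) (Fin (n+1)) ℝ := Aᵀ * Λ with hM
  have hMapp : ∀ i j, M i j = A j i * Λ j j := AtL_apply A Λ hΛdiag
  -- column 0 of M is zero
  have hMcol0 : ∀ i, M i 0 = 0 := fun i => by rw [hMapp, hΛ00, mul_zero]
  -- column sums of M
  have hMcolsum : ∀ j, ∑ i, M i j = Λ j j := by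
    intro j
    simp only [hMapp]
    rw [← Finset.sum_mul, hArow, one_mul]
  have hMnonneg : ∀ i j, 0 ≤ M i j := by
    intro i j
    rw [hMapp]
    exact mul_nonneg (hA01 j i).1 (by rcases hΛ01 j with h | h <;> rw [h] <;> norm_num)
  have hΛle1 : ∀ j, Λ j j ≤ 1 := fun j => by rcases hΛ01 j with h | h <;> rw [h] <;> norm_num
  have hΛnn : ∀ j, 0 ≤ Λ j j := fun j => by rcases hΛ01 j with h | h <;> rw [h] <;> norm_num
  -- sum of off-0 rows of column j
  have hMtail : ∀ j : Fin (n+1), j ≠ 0 → ∑ k ∈ Finset.univ.erase 0, A j k ≤ 1 - δ := by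
    intro j hj
    have h1 : A j 0 + ∑ k ∈ Finset.univ.erase 0, A j k = 1 := by
      rw [Finset.add_sum_erase _ _ (Finset.mem_univ 0)]
      exact hArow j
    have := hAδ j hj
    linarith
  -- invertibility
  have hdet : IsUnit (1 - M).det := by
    rw [isUnit_iff_ne_zero]
    intro h0
    rw [← Matrix.det_transpose] at h0
    obtain ⟨v, hv0, hv⟩ := (Matrix.exists_mulVec_eq_zero_iff).mpr h0
    -- (1 - Mᵀ) *ᵥ v = 0  →  v i = ∑ j, M j i * v j
    have hveq : ∀ i, v i = Λ i i * ∑ j, A i j * v j := by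
      intro i
      have := congrFun hv i
      rw [Matrix.transpose_sub, Matrix.transpose_one, Matrix.sub_mulVec, Matrix.one_mulVec,
        Pi.zero_apply] at this
      have h2 : v i = (Mᵀ *ᵥ v) i := by
        have h3 := sub_eq_zero.mp (congrFun (?_ : (v - Mᵀ *ᵥ v) = 0) i)
        · exact h3
        · funext k
          have hk := congrFun hv k
          rw [Matrix.transpose_sub, Matrix.transpose_one, Matrix.sub_mulVec,
            Matrix.one_mulVec, Pi.zero_apply] at hk
          exact hk
      rw [h2, Matrix.mulVec, dotProduct]
      simp only [Matrix.transpose_apply, hMapp]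
      rw [Finset.mul_sum]
      congr 1; ext j; ring
    have hv0' : v 0 = 0 := by rw [hveq 0, hΛ00, zero_mul]
    set T : ℝ := Finset.univ.sup' Finset.univ_nonempty (fun i => |v i|) with hT
    have hvle : ∀ i, |v i| ≤ T := fun i =>
      Finset.le_sup' (fun i => |v i|) (Finset.mem_univ i)
    have hTnn : 0 ≤ T := (abs_nonneg (v 0)).trans (hvle 0)
    have hstep : ∀ i, |v i| ≤ (1 - δ) * T := by
      intro i
      rcases hΛ01 i with h | h
      · rw [hveq i, h, zero_mul, abs_zero]
        exact mul_nonneg (by linarith) hTnn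
      · have hi0 : i ≠ 0 := by
          intro he; rw [he, hΛ00] at h; norm_num at h
        rw [hveq i, h, one_mul]
        calc |∑ j, A i j * v j| ≤ ∑ j, |A i j * v j| := Finset.abs_sum_le_sum_abs _ _
          _ = ∑ j, A i j * |v j| := by
              refine Finset.sum_congr rfl fun j _ => ?_
              rw [abs_mul, abs_of_nonneg (hA01 i j).1]
          _ = ∑ j ∈ Finset.univ.erase 0, A i j * |v j| := by
              rw [← Finset.add_sum_erase _ _ (Finset.mem_univ 0), hv0', abs_zero, mul_zero,
                zero_add]
          _ ≤ ∑ j ∈ Finset.univ.erase 0, A i j * T :=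
              Finset.sum_le_sum fun j _ => mul_le_mul_of_nonneg_left (hvle j) (hA01 i j).1
          _ = (∑ j ∈ Finset.univ.erase 0, A i j) * T := by rw [Finset.sum_mul]
          _ ≤ (1 - δ) * T := mul_le_mul_of_nonneg_right (hMtail i hi0) hTnn
    have hTle : T ≤ (1 - δ) * T := Finset.sup'_le _ _ fun i _ => hstep i
    have hT0 : T ≤ 0 := by nlinarith
    apply hv0
    funext i
    have := (abs_nonneg (v i)).antisymm ((hvle i).trans hT0)
    exact abs_eq_zero.mp this.symm
  refine ⟨hdet, ?_⟩
  -- norm bound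
  set S : Matrix (Fin (n+1)) (Fin (n+1)) ℝ := (1 - M)⁻¹ with hS
  have hSeq : S = 1 + S * M := by
    have h1 : S * (1 - M) = 1 := Matrix.nonsing_inv_mul _ hdet
    rw [Matrix.mul_sub, Matrix.mul_one] at h1
    exact sub_eq_iff_eq_add.mp h1
  have hSM0 : ∀ k, (S * M) k 0 = 0 := by
    intro k
    rw [Matrix.mul_apply]
    exact Finset.sum_eq_zero fun l _ => by rw [hMcol0, mul_zero]
  have hrec : S * M = M + (S * M) * M := by
    calc S * M = (1 + S * M) * M := by rw [← hSeq]
      _ = M + (S * M) * M := by rw [add_mul, one_mul]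
  set t : Fin (n+1) → ℝ := fun j => ∑ k, |(S * M) k j| with ht
  set T : ℝ := Finset.univ.sup' Finset.univ_nonempty t with hT
  have ht0 : t 0 = 0 := Finset.sum_eq_zero fun k _ => by rw [hSM0, abs_zero]
  have htle : ∀ j, t j ≤ T := fun j => Finset.le_sup' t (Finset.mem_univ j)
  have hTnn : 0 ≤ T := ht0 ▸ htle 0
  have hstep : ∀ j, t j ≤ 1 + (1 - δ) * T := by
    intro j
    have key : t j ≤ Λ j j + ∑ l, t l * M l j := by
      calc t j = ∑ k, |(M + (S * M) * M) k j| := by rw [ht]; simp only [← hrec]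
        _ ≤ ∑ k, (M k j + ∑ l, |(S * M) k l| * M l j) := by
            refine Finset.sum_le_sum fun k _ => ?_
            simp only [Matrix.add_apply, Matrix.mul_apply]
            refine (abs_add_le _ _).trans ?_
            gcongr
            · exact le_of_eq (abs_of_nonneg (hMnonneg k j))
            · refine (Finset.abs_sum_le_sum_abs _ _).trans ?_
              refine Finset.sum_le_sum fun l _ => ?_
              rw [abs_mul, abs_of_nonneg (hMnonneg l j)]
        _ = Λ j j + ∑ l, t l * M l j := by
            rw [Finset.sum_add_distrib, hMcolsum j]
            congr 1
            rw [Finset.sum_comm]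
            refine Finset.sum_congr rfl fun l _ => ?_
            rw [ht, Finset.sum_mul]
    rcases hΛ01 j with h | h
    · have hz : ∀ l, M l j = 0 := fun l => by rw [hMapp, h, mul_zero]
      have : ∑ l, t l * M l j = 0 := Finset.sum_eq_zero fun l _ => by rw [hz, mul_zero]
      rw [this, h, add_zero] at key
      have : (0:ℝ) ≤ (1 - δ) * T := mul_nonneg (by linarith) hTnn
      linarith
    · have hj0 : j ≠ 0 := by intro he; rw [he, hΛ00] at h; norm_num at h
      have h2 : ∑ l, t l * M l j ≤ (1 - δ) * T := by
        calc ∑ l, t l * M l j = ∑ l, t l * A j l := by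
              refine Finset.sum_congr rfl fun l _ => ?_
              rw [hMapp, h, mul_one]
          _ = ∑ l ∈ Finset.univ.erase 0, t l * A j l := by
              rw [← Finset.add_sum_erase _ _ (Finset.mem_univ 0), ht0, zero_mul, zero_add]
          _ ≤ ∑ l ∈ Finset.univ.erase 0, T * A j l :=
              Finset.sum_le_sum fun l _ =>
                mul_le_mul_of_nonneg_right (htle l) (hA01 j l).1
          _ = T * ∑ l ∈ Finset.univ.erase 0, A j l := by rw [Finset.mul_sum]
          _ ≤ T * (1 - δ) := mul_le_mul_of_nonneg_left (hMtail j hj0) hTnn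
          _ = (1 - δ) * T := mul_comm _ _
      rw [h] at key
      linarith
  have hTle : T ≤ 1 + (1 - δ) * T := Finset.sup'_le _ _ fun j _ => hstep j
  have hT1δ : T ≤ 1 / δ := by
    rw [le_div_iff₀ hδ]
    nlinarith
  apply opNorm1_le_of
  intro j
  have : ∑ k, |S k j| ≤ 1 + t j := by
    calc ∑ k, |S k j| = ∑ k, |(1 : Matrix (Fin (n+1)) (Fin (n+1)) ℝ) k j + (S * M) k j| := by
          refine Finset.sum_congr rfl fun k _ => ?_
          nth_rewrite 1 [hSeq]; rfl
      _ ≤ ∑ k, ((1 : Matrix (Fin (n+1)) (Fin (n+1)) ℝ) k j + |(S * M) k j|) := by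
          refine Finset.sum_le_sum fun k _ => ?_
          refine (abs_add_le _ _).trans ?_
          gcongr
          rw [Matrix.one_apply]
          split <;> simp
      _ = 1 + t j := by
          rw [Finset.sum_add_distrib, ht]
          congr 1
          simp [Matrix.one_apply]
  have hfin : (1:ℝ) + 1 / δ = (1 + δ) / δ := by field_simp; ring
  calc ∑ k, |S k j| ≤ 1 + t j := this
    _ ≤ 1 + T := by linarith [htle j]
    _ ≤ 1 + 1 / δ := by linarith
    _ = (1 + δ) / δ := hfin

set_option maxHeartbeats 1000000 in
/-- Lipschitz continuity of `A ↦ (I - AᵀΛ)⁻¹` on the set of admissible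
relative exposure matrices:
`‖(I - AᵀΛ)⁻¹ - (I - BᵀΛ)⁻¹‖₁ ≤ n ((1+δ)/δ)² ‖Λ‖₁ ‖A - B‖₁`. -/
theorem stmt5 (n : ℕ) (δ : ℝ) (hδ : 0 < δ)
    (A B Λ : Matrix (Fin (n+1)) (Fin (n+1)) ℝ)
    (hA01 : ∀ i j, A i j ∈ Set.Icc (0:ℝ) 1)
    (hArow : ∀ i, ∑ j, A i j = 1)
    (hAdiag : ∀ i, A i i = 0)
    (hAδ : ∀ i : Fin (n+1), i ≠ 0 → δ ≤ A i 0)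
    (hB01 : ∀ i j, B i j ∈ Set.Icc (0:ℝ) 1)
    (hBrow : ∀ i, ∑ j, B i j = 1)
    (hBdiag : ∀ i, B i i = 0)
    (hBδ : ∀ i : Fin (n+1), i ≠ 0 → δ ≤ B i 0)
    (hΛdiag : ∀ i j, i ≠ j → Λ i j = 0)
    (hΛ01 : ∀ i, Λ i i = 0 ∨ Λ i i = 1)
    (hΛ00 : Λ 0 0 = 0) :
    opNorm1 ((1 - Aᵀ * Λ)⁻¹ - (1 - Bᵀ * Λ)⁻¹)
      ≤ n * ((1 + δ) / δ) ^ 2 * opNorm1 Λ * opNorm1 (A - B) := by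
  -- n cannot be 0
  rcases Nat.eq_zero_or_pos n with hn | hn
  · subst hn
    have h1 := hArow 0
    have h2 := hAdiag 0
    rw [Fin.sum_univ_one] at h1
    rw [h2] at h1
    norm_num at h1
  -- δ ≤ 1
  have hone : (⟨1, by omega⟩ : Fin (n+1)) ≠ 0 := by
    intro h
    have := congrArg Fin.val h
    simp at this
  have hδ1 : δ ≤ 1 := (hAδ _ hone).trans (hA01 _ 0).2
  obtain ⟨hdetA, hnA⟩ := stmt5_aux n δ hδ hδ1 A Λ hA01 hArow hAδ hΛdiag hΛ01 hΛ00
  obtain ⟨hdetB, hnB⟩ := stmt5_aux n δ hδ hδ1 B Λ hB01 hBrow hBδ hΛdiag hΛ01 hΛ00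
  set X : Matrix (Fin (n+1)) (Fin (n+1)) ℝ := 1 - Aᵀ * Λ with hX
  set Y : Matrix (Fin (n+1)) (Fin (n+1)) ℝ := 1 - Bᵀ * Λ with hY
  clear_value X Y
  -- key identity
  have hid : X⁻¹ - Y⁻¹ = X⁻¹ * ((A - B)ᵀ * Λ) * Y⁻¹ := by
    have h3 : (A - B)ᵀ * Λ = Y - X := by
      rw [Matrix.transpose_sub, Matrix.sub_mul, hX, hY]
      abel
    rw [h3]
    calc X⁻¹ - Y⁻¹ = X⁻¹ * Y * Y⁻¹ - X⁻¹ * X * Y⁻¹ := by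
          rw [Matrix.mul_assoc X⁻¹ Y, Matrix.mul_nonsing_inv _ hdetB,
            Matrix.nonsing_inv_mul _ hdetA, Matrix.mul_one, Matrix.one_mul]
      _ = X⁻¹ * (Y - X) * Y⁻¹ := by rw [Matrix.mul_sub, Matrix.sub_mul]
  -- norm of (A-B)ᵀ
  have hABt : opNorm1 ((A - B)ᵀ) ≤ n * opNorm1 (A - B) := by
    apply opNorm1_le_of
    intro j
    have hdiagj : |(A - B)ᵀ j j| = 0 := by
      simp [Matrix.sub_apply, hAdiag j, hBdiag j]
    calc ∑ i, |(A - B)ᵀ i j| = ∑ i ∈ Finset.univ.erase j, |(A - B)ᵀ i j| := by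
          rw [← Finset.add_sum_erase _ _ (Finset.mem_univ j), hdiagj, zero_add]
      _ ≤ ∑ _i ∈ Finset.univ.erase j, opNorm1 (A - B) := by
          refine Finset.sum_le_sum fun i _ => ?_
          have : (A - B)ᵀ i j = (A - B) j i := rfl
          rw [this]
          exact abs_entry_le_opNorm1 (A - B) j i
      _ = n * opNorm1 (A - B) := by
          rw [Finset.sum_const, nsmul_eq_mul]
          congr 1
          rw [Finset.card_erase_of_mem (Finset.mem_univ j), Finset.card_univ]
          simp
  -- combine
  have hk : (0:ℝ) ≤ (1 + δ) / δ := div_nonneg (by linarith) hδ.le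
  calc opNorm1 (X⁻¹ - Y⁻¹) = opNorm1 (X⁻¹ * ((A - B)ᵀ * Λ) * Y⁻¹) := by rw [hid]
    _ ≤ opNorm1 (X⁻¹ * ((A - B)ᵀ * Λ)) * opNorm1 (Y⁻¹) := opNorm1_mul_le _ _
    _ ≤ (opNorm1 (X⁻¹) * opNorm1 ((A - B)ᵀ * Λ)) * opNorm1 (Y⁻¹) := by
        exact mul_le_mul_of_nonneg_right (opNorm1_mul_le _ _) (opNorm1_nonneg _)
    _ ≤ (opNorm1 (X⁻¹) * (opNorm1 ((A - B)ᵀ) * opNorm1 Λ)) * opNorm1 (Y⁻¹) := by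
        refine mul_le_mul_of_nonneg_right ?_ (opNorm1_nonneg _)
        exact mul_le_mul_of_nonneg_left (opNorm1_mul_le _ _) (opNorm1_nonneg _)
    _ ≤ ((1 + δ) / δ * ((n * opNorm1 (A - B)) * opNorm1 Λ)) * ((1 + δ) / δ) := by
        have h1 : 0 ≤ opNorm1 Λ := opNorm1_nonneg _
        have h4 : opNorm1 ((A - B)ᵀ) * opNorm1 Λ ≤ (n * opNorm1 (A - B)) * opNorm1 Λ :=
          mul_le_mul_of_nonneg_right hABt h1
        have h5 : opNorm1 (X⁻¹) * (opNorm1 ((A - B)ᵀ) * opNorm1 Λ)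
            ≤ (1 + δ) / δ * ((n * opNorm1 (A - B)) * opNorm1 Λ) :=
          mul_le_mul hnA h4 (mul_nonneg (opNorm1_nonneg _) h1) hk
        exact mul_le_mul h5 hnB (opNorm1_nonneg _)
          (mul_nonneg hk (mul_nonneg (mul_nonneg (Nat.cast_nonneg n) (opNorm1_nonneg _)) h1))
    _ = n * ((1 + δ) / δ) ^ 2 * opNorm1 Λ * opNorm1 (A - B) := by ring
end

section
/- Suppose $V^\uparrow, V^\downarrow \in \mathbb{R}^{n+1}$ are two solutions of the fixed point equation $V = w + c - A^\top V^-$ where $w, c \in \mathbb{R}^{n+1}$ are fixed, $A \in [0,1]^{(n+1)\times(n+1)}$ has all row sums equal to 1, and $V^\uparrow \ge V^\downarrow$ componentwise. Then $\sum_{i=0}^n (V_i^\uparrow)^+ = \sum_{i=0}^n (V_i^\downarrow)^+$, and consequently $(V_i^\uparrow)^+ = (V_i^\downarrow)^+$ for every $i$. -/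
open Matrix

/-- two comparable solutions of the clearing fixed point equation
`V = w + c - Aᵀ V⁻` with row-stochastic `A` have the same positive parts. -/
theorem stmt7 (n : ℕ) (w c : Fin (n+1) → ℝ)
    (A : Matrix (Fin (n+1)) (Fin (n+1)) ℝ)
    (hA01 : ∀ i j, A i j ∈ Set.Icc (0:ℝ) 1)
    (hArow : ∀ i, ∑ j, A i j = 1)
    (Vu Vd : Fin (n+1) → ℝ)
    (hVu : Vu = w + c - Aᵀ *ᵥ (fun i => max (-(Vu i)) 0))
    (hVd : Vd = w + c - Aᵀ *ᵥ (fun i => max (-(Vd i)) 0))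
    (hge : ∀ i, Vd i ≤ Vu i) :
    (∑ i, max (Vu i) 0 = ∑ i, max (Vd i) 0) ∧
    (∀ i, max (Vu i) 0 = max (Vd i) 0) := by
  have key : ∀ V : Fin (n+1) → ℝ,
      V = w + c - Aᵀ *ᵥ (fun i => max (-(V i)) 0) →
      ∑ i, max (V i) 0 = ∑ i, (w i + c i) := by
    intro V hV
    have h1 : ∀ i, max (V i) 0 = V i + max (-(V i)) 0 := by
      intro i; rcases le_total (V i) 0 with h | h
      · rw [max_eq_right h, max_eq_left (by linarith)]; ring
      · rw [max_eq_left h, max_eq_right (by linarith)]; ring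
    have h2 : ∀ i, V i = (w i + c i) - ∑ j, A j i * max (-(V j)) 0 := by
      intro i
      have := congrFun hV i
      simpa [mulVec, dotProduct, transpose_apply] using this
    calc ∑ i, max (V i) 0 = ∑ i, (V i + max (-(V i)) 0) := by
          exact Finset.sum_congr rfl fun i _ => h1 i
      _ = ∑ i, ((w i + c i) - ∑ j, A j i * max (-(V j)) 0 + max (-(V i)) 0) := by
          exact Finset.sum_congr rfl fun i _ => by rw [h2 i]
      _ = ∑ i, (w i + c i) - ∑ i, ∑ j, A j i * max (-(V j)) 0
            + ∑ i, max (-(V i)) 0 := by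
          rw [Finset.sum_add_distrib, Finset.sum_sub_distrib]
      _ = ∑ i, (w i + c i) := by
          have : ∑ i, ∑ j, A j i * max (-(V j)) 0 = ∑ i, max (-(V i)) 0 := by
            rw [Finset.sum_comm]
            exact Finset.sum_congr rfl fun j _ => by
              rw [← Finset.sum_mul, hArow j, one_mul]
          rw [this]; ring
  have hsum : ∑ i, max (Vu i) 0 = ∑ i, max (Vd i) 0 := by
    rw [key Vu hVu, key Vd hVd]
  refine ⟨hsum, ?_⟩
  have hle : ∀ i ∈ Finset.univ, max (Vd i) 0 ≤ max (Vu i) 0 :=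
    fun i _ => max_le_max (hge i) le_rfl
  have := (Finset.sum_eq_sum_iff_of_le hle).1 hsum.symm
  exact fun i => (this i (Finset.mem_univ i)).symm
end

section
/- Suppose $V^\uparrow \ge V^\downarrow$ are two solutions of $V = w + c - A^\top V^-$ with $A$ row-stochastic, $a_{i0} > 0$ for all $i \in \{1,\dots,n\}$, $A^\top V^-$ depending only on coordinates $1,\dots,n$ of $V^-$ (i.e., $V_0^- = 0$ for both solutions, the societal node is solvent). If additionally $(V_i^\uparrow)^+ = (V_i^\downarrow)^+$ for all $i$ and $V_0^\uparrow = V_0^\downarrow$, then $V^\uparrow = V^\downarrow$. -/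
open Matrix

/-- uniqueness step of the static Eisenberg-Noe argument.  If two
comparable solutions of `V = w + c - Aᵀ V⁻` have the same positive parts, both
have a solvent societal node (coordinate 0), agree at coordinate 0, every bank
owes to society (`A i 0 > 0` for `i ≠ 0`), and `A` is row-stochastic, then the
two solutions coincide. -/
theorem stmt8 (n : ℕ) (w c : Fin (n+1) → ℝ)
    (A : Matrix (Fin (n+1)) (Fin (n+1)) ℝ)
    (hA01 : ∀ i j, A i j ∈ Set.Icc (0:ℝ) 1)
    (hArow : ∀ i, ∑ j, A i j = 1)
    (hA0 : ∀ i : Fin (n+1), i ≠ 0 → 0 < A i 0)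
    (Vu Vd : Fin (n+1) → ℝ)
    (hVu : Vu = w + c - Aᵀ *ᵥ (fun i => max (-(Vu i)) 0))
    (hVd : Vd = w + c - Aᵀ *ᵥ (fun i => max (-(Vd i)) 0))
    (hge : ∀ i, Vd i ≤ Vu i)
    (hVu0 : max (-(Vu 0)) 0 = 0)
    (hVd0 : max (-(Vd 0)) 0 = 0)
    (hpos : ∀ i, max (Vu i) 0 = max (Vd i) 0)
    (h00 : Vu 0 = Vd 0) :
    Vu = Vd := by
  funext i
  by_contra hne
  have hlt : Vd i < Vu i := lt_of_le_of_ne (hge i) (fun h => hne h.symm)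
  have hi0 : i ≠ 0 := by rintro rfl; exact hne h00
  -- Vu i ≤ 0
  have hVule : Vu i ≤ 0 := by
    by_contra h
    push_neg at h
    have h1 := hpos i
    rw [max_eq_left h.le] at h1
    rcases max_cases (Vd i) 0 with ⟨h2, _⟩ | ⟨h2, _⟩ <;> rw [h2] at h1 <;> linarith
  -- negative parts
  set f : Fin (n+1) → ℝ := fun j => max (-(Vu j)) 0 with hf
  set g : Fin (n+1) → ℝ := fun j => max (-(Vd j)) 0 with hg
  have hfg : ∀ j, f j ≤ g j := fun j => max_le_max (neg_le_neg (hge j)) le_rfl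
  have hfgi : f i < g i := by
    have h1 : f i = -(Vu i) := max_eq_left (by linarith)
    have h2 : g i = -(Vd i) := max_eq_left (by linarith)
    rw [h1, h2]; linarith
  -- evaluate fixed point at 0
  have hu0 : Vu 0 = w 0 + c 0 - ∑ j, A j 0 * f j := by
    conv_lhs => rw [hVu]
    simp [mulVec, dotProduct, Matrix.transpose_apply]
  have hd0 : Vd 0 = w 0 + c 0 - ∑ j, A j 0 * g j := by
    conv_lhs => rw [hVd]
    simp [mulVec, dotProduct, Matrix.transpose_apply]
  have hsumlt : ∑ j, A j 0 * f j < ∑ j, A j 0 * g j := by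
    apply Finset.sum_lt_sum (fun j _ => mul_le_mul_of_nonneg_left (hfg j) (hA01 j 0).1)
    exact ⟨i, Finset.mem_univ i, mul_lt_mul_of_pos_left hfgi (hA0 i hi0)⟩
  rw [hu0, hd0] at h00
  linarith
end

section
/- Suppose $a_{ij}: [0,T] \to \mathbb{R}$ satisfies $a_{ij}'(t) = \frac{\dot L_{ij}(t) - a_{ij}(t)\sum_k \dot L_{ik}(t)}{V_i(t)^-}$ on an interval where $V_i(t) < 0$, with $\dot L_{ij}(t) \ge 0$, $\sum_k \dot L_{ik}(t) > 0$, and $a_{ij}(t_0) \ge 0$ at the left endpoint $t_0$. Then $a_{ij}(t) \ge 0$ for all $t \ge t_0$ in the interval. Moreover, if $\dot L_{i0}(t)/\sum_k \dot L_{ik}(t) \ge \delta$ for all $t$ and $a_{i0}(t_0) \ge \delta$, then $a_{i0}(t) \ge \delta$ for all $t \ge t_0$. -/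
/-- Forward invariance: if `f` has derivative `g t` at every point of `[t₀,T]`,
`g t > 0` whenever `f t < 0`, and `f t₀ ≥ 0`, then `f ≥ 0` on `[t₀,T]`. -/
lemma stmt13_aux (t₀ T : ℝ) (f g : ℝ → ℝ)
    (hf : ∀ t ∈ Set.Icc t₀ T, HasDerivAt f (g t) t)
    (hpos : ∀ t ∈ Set.Icc t₀ T, f t < 0 → 0 < g t)
    (h0 : 0 ≤ f t₀) : ∀ t ∈ Set.Icc t₀ T, 0 ≤ f t := by
  intro t₁ ht₁
  by_contra hneg
  push_neg at hneg
  have hcont : ContinuousOn f (Set.Icc t₀ T) := fun x hx =>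
    (hf x hx).continuousAt.continuousWithinAt
  have hsub : Set.Icc t₀ t₁ ⊆ Set.Icc t₀ T := Set.Icc_subset_Icc le_rfl ht₁.2
  set S : Set ℝ := Set.Icc t₀ t₁ ∩ f ⁻¹' Set.Ici 0 with hS
  have hSclosed : IsClosed S :=
    (hcont.mono hsub).preimage_isClosed_of_isClosed isClosed_Icc isClosed_Ici
  have hSne : S.Nonempty := ⟨t₀, ⟨le_rfl, ht₁.1⟩, h0⟩
  have hScompact : IsCompact S :=
    isCompact_Icc.of_isClosed_subset hSclosed Set.inter_subset_left
  set s := sSup S with hs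
  have hsmem : s ∈ S := hScompact.sSup_mem hSne
  have hsIcc : s ∈ Set.Icc t₀ t₁ := hsmem.1
  have hfs : (0:ℝ) ≤ f s := hsmem.2
  have hst₁ : s < t₁ := by
    rcases lt_or_eq_of_le hsIcc.2 with h | h
    · exact h
    · rw [h] at hfs; linarith
  have hnegmid : ∀ t ∈ Set.Ioc s t₁, f t < 0 := by
    intro t ht
    by_contra h
    push_neg at h
    have htS : t ∈ S := ⟨⟨hsIcc.1.trans ht.1.le, ht.2⟩, h⟩
    exact absurd (le_csSup hScompact.bddAbove htS) (not_le.mpr ht.1)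
  have hmono : StrictMonoOn f (Set.Icc s t₁) := by
    apply strictMonoOn_of_deriv_pos (convex_Icc s t₁)
    · exact hcont.mono (Set.Icc_subset_Icc (hsub hsIcc).1 ht₁.2)
    · intro x hx
      rw [interior_Icc] at hx
      have hxIcc : x ∈ Set.Icc t₀ T :=
        ⟨(hsub hsIcc).1.trans hx.1.le, hx.2.le.trans ht₁.2⟩
      rw [(hf x hxIcc).deriv]
      exact hpos x hxIcc (hnegmid x ⟨hx.1, hx.2.le⟩)
  have := hmono (Set.left_mem_Icc.mpr hst₁.le) (Set.right_mem_Icc.mpr hst₁.le) hst₁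
  linarith

/-- forward invariance for the relative exposure ODE.
Nonnegativity is preserved, and the exposure to society stays above `δ`
provided the instantaneous relative liability to society stays above `δ`. -/
theorem stmt13 (n : ℕ) (t₀ T δ : ℝ) (ht₀T : t₀ ≤ T) (hδ : 0 < δ)
    (Ld : Fin (n+1) → ℝ → ℝ) (j : Fin (n+1))
    (hLdcont : ∀ k, Continuous (Ld k))
    (hLdpos : ∀ k t, 0 ≤ Ld k t)
    (hLdsum : ∀ t ∈ Set.Icc t₀ T, 0 < ∑ k, Ld k t)
    (Vi : ℝ → ℝ)
    (hVcont : ContinuousOn Vi (Set.Icc t₀ T))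
    (hVneg : ∀ t ∈ Set.Icc t₀ T, Vi t < 0)
    (a a0 : ℝ → ℝ)
    (hODEa : ∀ t ∈ Set.Icc t₀ T,
      HasDerivAt a ((Ld j t - a t * ∑ k, Ld k t) / max (-(Vi t)) 0) t)
    (hODEa0 : ∀ t ∈ Set.Icc t₀ T,
      HasDerivAt a0 ((Ld 0 t - a0 t * ∑ k, Ld k t) / max (-(Vi t)) 0) t)
    (hainit : 0 ≤ a t₀)
    (hratio : ∀ t ∈ Set.Icc t₀ T, δ ≤ Ld 0 t / ∑ k, Ld k t)
    (ha0init : δ ≤ a0 t₀) :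
    (∀ t ∈ Set.Icc t₀ T, 0 ≤ a t) ∧ (∀ t ∈ Set.Icc t₀ T, δ ≤ a0 t) := by
  have hW : ∀ t ∈ Set.Icc t₀ T, 0 < max (-(Vi t)) 0 := by
    intro t ht
    exact lt_max_of_lt_left (by linarith [hVneg t ht])
  constructor
  · apply stmt13_aux t₀ T a _ hODEa _ hainit
    intro t ht hat
    apply div_pos _ (hW t ht)
    have hsum := hLdsum t ht
    nlinarith [hLdpos j t]
  · have key : ∀ t ∈ Set.Icc t₀ T, 0 ≤ (fun t => a0 t - δ) t := by
      apply stmt13_aux t₀ T _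
        (fun t => (Ld 0 t - a0 t * ∑ k, Ld k t) / max (-(Vi t)) 0)
      · intro t ht
        exact (hODEa0 t ht).sub_const δ
      · intro t ht hat
        apply div_pos _ (hW t ht)
        have hsum := hLdsum t ht
        have h1 : δ * (∑ k, Ld k t) ≤ Ld 0 t :=
          (le_div_iff₀ hsum).mp (hratio t ht)
        nlinarith
      · simpa using ha0init
    intro t ht
    have h := key t ht
    simp only at h
    linarith
end
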